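/- Integrated policy-improvement lower bound: let (X, 𝒳) and (Y, 𝒴) be measurable spaces, ρ a probability measure on X, r : X × Y → ℝ measurable with 0 ≤ r ≤ 1, 0 < ε ≤ 3/4, and let π, π_k, α be Markov kernels from X to Y (probability measures π(·|x), π_k(·|x), α(·|x) for each x), with all the functions below measurable and integrable in x. Then ∫ J(π(·|x)) dρ(x) − ∫ J(π_k(·|x)) dρ(x) ≥ ∫ L_{α(·|x)}(π(·|x)) dρ(x) − 2·M_{α,r,ε}·( ∫ TV(π(·|x), α(·|x))² dρ(x) )^{1/2} − 2·∫ TV(π_k(·|x), α(·|x)) dρ(x), where M_{α,r,ε} = ( ∫ ((1 − σ_{α(·|x),ε})/σ_{α(·|x),ε})² dρ(x) )^{1/2}. -/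

import Mathlib

open MeasureTheory

/-- Expected reward `J(m) = ∫ r dm`. -/
noncomputable def J {Y : Type*} [MeasurableSpace Y] (r : Y → ℝ) (m : Measure Y) : ℝ :=
  ∫ y, r y ∂m

/-- Variance `σ_m² = ∫ (r − μ_m)² dm` with `μ_m = J(m)`. -/
noncomputable def rvar {Y : Type*} [MeasurableSpace Y] (r : Y → ℝ) (m : Measure Y) : ℝ :=
  ∫ y, (r y - J r m) ^ 2 ∂m

/-- Regularized standard deviation `σ_{m,ε} = sqrt(σ_m² + ε)`. -/
noncomputable def sigmaEps {Y : Type*} [MeasurableSpace Y] (r : Y → ℝ) (m : Measure Y)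
    (ε : ℝ) : ℝ :=
  Real.sqrt (rvar r m + ε)

/-- Off-policy advantage objective `L_α(π) = (J(π) − μ_α)/σ_{α,ε}`. -/
noncomputable def Ladv {Y : Type*} [MeasurableSpace Y] (r : Y → ℝ) (α π : Measure Y)
    (ε : ℝ) : ℝ :=
  (J r π - J r α) / sigmaEps r α ε

/-- Total variation distance `TV(m₁,m₂) = sup_{A measurable} |m₁(A) − m₂(A)|`. -/
noncomputable def tvDist {Y : Type*} [MeasurableSpace Y] (m₁ m₂ : Measure Y) : ℝ :=
  ⨆ A : {s : Set Y // MeasurableSet s}, |(m₁ A.1).toReal - (m₂ A.1).toReal|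

/-!
For rewards in `[0, 1]`, expected rewards under two finite measures differ by at most their total
variation distance. Since `J(π) - J(α) = σ L_α(π)` with `σ = σ_{α,ε}`, splitting
`J(π) - J(πₖ) = (J(π) - J(α)) + (J(α) - J(πₖ))` gives the pointwise bound
`J(π) - J(πₖ) ≥ L_α(π) - |(1 - σ)/σ| TV(π, α) - TV(πₖ, α)`. Integrating it over `ρ` and bounding
the middle term by Cauchy–Schwarz in `L²(ρ)` gives the claim.
-/

section TotalVariation

variable {Y : Type*} [MeasurableSpace Y]

theorem tvDist_comm (m₁ m₂ : Measure Y) : tvDist m₁ m₂ = tvDist m₂ m₁ := by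
  simp only [tvDist, abs_sub_comm]

variable (m₁ m₂ : Measure Y) [IsFiniteMeasure m₁] [IsFiniteMeasure m₂]

theorem bddAbove_range_abs_sub_measureReal :
    BddAbove (Set.range fun A : {s : Set Y // MeasurableSet s} =>
      |(m₁ A.1).toReal - (m₂ A.1).toReal|) := by
  refine ⟨m₁.real Set.univ + m₂.real Set.univ, ?_⟩
  rintro _ ⟨A, rfl⟩
  show |m₁.real A.1 - m₂.real A.1| ≤ _
  have h₁ : m₁.real A.1 ≤ m₁.real Set.univ := measureReal_mono (Set.subset_univ _)
  have h₂ : m₂.real A.1 ≤ m₂.real Set.univ := measureReal_mono (Set.subset_univ _)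
  have h₁' : 0 ≤ m₁.real A.1 := measureReal_nonneg
  have h₂' : 0 ≤ m₂.real A.1 := measureReal_nonneg
  exact abs_sub_le_of_nonneg_of_le h₁' (by linarith) h₂' (by linarith)

theorem abs_measureReal_sub_le_tvDist {A : Set Y} (hA : MeasurableSet A) :
    |m₁.real A - m₂.real A| ≤ tvDist m₁ m₂ :=
  le_ciSup (bddAbove_range_abs_sub_measureReal m₁ m₂) ⟨A, hA⟩

theorem tvDist_nonneg : 0 ≤ tvDist m₁ m₂ :=
  (abs_nonneg _).trans (abs_measureReal_sub_le_tvDist m₁ m₂ MeasurableSet.empty)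

variable {m₁ m₂} {f : Y → ℝ}

/-- With `gᵢ = dmᵢ/d(m₁ + m₂)`, the integrand `(g₁ - g₂) f` is at most `g₁ - g₂` on
`{g₂ < g₁}` and at most `0` off it. -/
theorem integral_sub_integral_le_tvDist (hf : Measurable f) (hf₀ : ∀ y, 0 ≤ f y)
    (hf₁ : ∀ y, f y ≤ 1) :
    ∫ y, f y ∂m₁ - ∫ y, f y ∂m₂ ≤ tvDist m₁ m₂ := by
  set μ := m₁ + m₂
  have h₁ : m₁ ≪ μ := Measure.absolutelyContinuous_of_le (Measure.le_add_right le_rfl)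
  have h₂ : m₂ ≪ μ := Measure.absolutelyContinuous_of_le (Measure.le_add_left le_rfl)
  set g₁ : Y → ℝ := fun y => (m₁.rnDeriv μ y).toReal
  set g₂ : Y → ℝ := fun y => (m₂.rnDeriv μ y).toReal
  have hg₁ : Integrable g₁ μ := Measure.integrable_toReal_rnDeriv
  have hg₂ : Integrable g₂ μ := Measure.integrable_toReal_rnDeriv
  have hfi : ∀ (m : Measure Y) [IsFiniteMeasure m], Integrable f m := fun m _ =>
    Integrable.of_bound hf.aestronglyMeasurable 1 (Filter.Eventually.of_forall fun y => by
      rw [Real.norm_of_nonneg (hf₀ y)]; exact hf₁ y)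
  have hg₁f : Integrable (fun y => g₁ y * f y) μ :=
    (integrable_toReal_rnDeriv_mul_iff h₁).2 (hfi m₁)
  have hg₂f : Integrable (fun y => g₂ y * f y) μ :=
    (integrable_toReal_rnDeriv_mul_iff h₂).2 (hfi m₂)
  set A := {y | g₂ y < g₁ y}
  have hA : MeasurableSet A :=
    measurableSet_lt (Measure.measurable_rnDeriv _ _).ennreal_toReal
      (Measure.measurable_rnDeriv _ _).ennreal_toReal
  calc ∫ y, f y ∂m₁ - ∫ y, f y ∂m₂ = ∫ y, g₁ y * f y - g₂ y * f y ∂μ := by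
        rw [integral_sub hg₁f hg₂f, integral_toReal_rnDeriv_mul h₁,
          integral_toReal_rnDeriv_mul h₂]
    _ ≤ ∫ y, A.indicator (fun y => g₁ y - g₂ y) y ∂μ := by
        refine integral_mono (hg₁f.sub hg₂f) ((hg₁.sub hg₂).indicator hA) fun y => ?_
        by_cases hy : y ∈ A
        · simp only [Set.indicator_of_mem hy]
          nlinarith [hf₁ y, show g₂ y < g₁ y from hy]
        · simp only [Set.indicator_of_notMem hy]
          nlinarith [hf₀ y, not_lt.1 (show ¬ g₂ y < g₁ y from hy)]
    _ = m₁.real A - m₂.real A := by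
        rw [integral_indicator hA, integral_sub hg₁.integrableOn hg₂.integrableOn,
          Measure.setIntegral_toReal_rnDeriv h₁, Measure.setIntegral_toReal_rnDeriv h₂]
    _ ≤ tvDist m₁ m₂ := (le_abs_self _).trans (abs_measureReal_sub_le_tvDist m₁ m₂ hA)

theorem abs_integral_sub_integral_le_tvDist (hf : Measurable f) (hf₀ : ∀ y, 0 ≤ f y)
    (hf₁ : ∀ y, f y ≤ 1) :
    |∫ y, f y ∂m₁ - ∫ y, f y ∂m₂| ≤ tvDist m₁ m₂ := by
  refine abs_sub_le_iff.2 ⟨integral_sub_integral_le_tvDist hf hf₀ hf₁, ?_⟩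
  rw [tvDist_comm]
  exact integral_sub_integral_le_tvDist hf hf₀ hf₁

end TotalVariation

section CauchySchwarz

variable {X : Type*} [MeasurableSpace X] {ρ : Measure X}

theorem memLp_two_abs_of_integrable_sq {f : X → ℝ} (hf : Integrable (fun x => f x ^ 2) ρ) :
    MemLp (fun x => |f x|) 2 ρ := by
  have hm : AEStronglyMeasurable (fun x => |f x|) ρ := by
    simpa only [Real.sqrt_sq_eq_abs] using
      Real.continuous_sqrt.comp_aestronglyMeasurable hf.aestronglyMeasurable
  exact (memLp_two_iff_integrable_sq hm).2 (by simpa only [sq_abs] using hf)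

theorem integral_abs_mul_abs_le_sqrt_mul_sqrt {f g : X → ℝ}
    (hf : Integrable (fun x => f x ^ 2) ρ) (hg : Integrable (fun x => g x ^ 2) ρ) :
    ∫ x, |f x| * |g x| ∂ρ ≤ √(∫ x, f x ^ 2 ∂ρ) * √(∫ x, g x ^ 2 ∂ρ) := by
  have h := integral_mul_le_Lp_mul_Lq_of_nonneg Real.HolderConjugate.two_two
    (Filter.Eventually.of_forall fun x => abs_nonneg (f x))
    (Filter.Eventually.of_forall fun x => abs_nonneg (g x))
    (by simpa using memLp_two_abs_of_integrable_sq hf)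
    (by simpa using memLp_two_abs_of_integrable_sq hg)
  simpa only [Real.rpow_two, sq_abs, Real.sqrt_eq_rpow, one_div] using h

theorem integral_sub_sqrt_mul_sqrt_sub_integral_le {L c t e d : X → ℝ}
    (hL : Integrable L ρ) (hc : Integrable (fun x => c x ^ 2) ρ)
    (ht : Integrable (fun x => t x ^ 2) ρ) (he : Integrable e ρ)
    (h : ∀ x, L x - |c x| * |t x| - e x ≤ d x) (hd : Integrable d ρ) :
    ∫ x, L x ∂ρ - √(∫ x, c x ^ 2 ∂ρ) * √(∫ x, t x ^ 2 ∂ρ) - ∫ x, e x ∂ρ ≤ ∫ x, d x ∂ρ := by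
  have hct : Integrable (fun x => |c x| * |t x|) ρ :=
    (memLp_two_abs_of_integrable_sq hc).integrable_mul (memLp_two_abs_of_integrable_sq ht)
  have hLct : Integrable (fun x => L x - |c x| * |t x|) ρ := hL.sub hct
  calc ∫ x, L x ∂ρ - √(∫ x, c x ^ 2 ∂ρ) * √(∫ x, t x ^ 2 ∂ρ) - ∫ x, e x ∂ρ
      ≤ ∫ x, L x ∂ρ - ∫ x, |c x| * |t x| ∂ρ - ∫ x, e x ∂ρ := by
        gcongr; exact integral_abs_mul_abs_le_sqrt_mul_sqrt hc ht
    _ = ∫ x, L x - |c x| * |t x| - e x ∂ρ := by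
        rw [integral_sub hLct he, integral_sub hL hct]
    _ ≤ ∫ x, d x ∂ρ := integral_mono (hLct.sub he) hd h

end CauchySchwarz

section PolicyImprovement

variable {Y : Type*} [MeasurableSpace Y]

theorem sigmaEps_pos (r : Y → ℝ) (m : Measure Y) {ε : ℝ} (hε : 0 < ε) : 0 < sigmaEps r m ε :=
  Real.sqrt_pos.2 (add_pos_of_nonneg_of_pos (integral_nonneg fun _ => sq_nonneg _) hε)

theorem div_sub_abs_mul_le {d t σ : ℝ} (hσ : 0 < σ) (hd : |d| ≤ t) :
    d / σ - |(1 - σ) / σ| * t ≤ d := by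
  have hsplit : d / σ - d = d * ((1 - σ) / σ) := by field_simp
  have hprod : d * ((1 - σ) / σ) ≤ |(1 - σ) / σ| * t := by
    calc d * ((1 - σ) / σ) ≤ |d| * |(1 - σ) / σ| := by rw [← abs_mul]; exact le_abs_self _
      _ ≤ t * |(1 - σ) / σ| := by gcongr
      _ = |(1 - σ) / σ| * t := mul_comm _ _
  linarith

theorem Ladv_sub_tvDist_le {r : Y → ℝ} (hr : Measurable r) (hr₀ : ∀ y, 0 ≤ r y)
    (hr₁ : ∀ y, r y ≤ 1) {ε : ℝ} (hε : 0 < ε) (π πk α : Measure Y) [IsFiniteMeasure π]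
    [IsFiniteMeasure πk] [IsFiniteMeasure α] :
    Ladv r α π ε - |(1 - sigmaEps r α ε) / sigmaEps r α ε| * tvDist π α - tvDist πk α ≤
      J r π - J r πk := by
  have hπα : |J r π - J r α| ≤ tvDist π α := abs_integral_sub_integral_le_tvDist hr hr₀ hr₁
  have hπkα : J r πk - J r α ≤ tvDist πk α := integral_sub_integral_le_tvDist hr hr₀ hr₁
  have := div_sub_abs_mul_le (sigmaEps_pos r α hε) hπα
  rw [Ladv]
  linarith

end PolicyImprovement

theorem integrated_offpolicy_improvement_general {X Y : Type*}
    [MeasurableSpace X] [MeasurableSpace Y]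
    (ρ : Measure X)
    (r : X × Y → ℝ) (hr_meas : Measurable r) (hr : ∀ p, 0 ≤ r p ∧ r p ≤ 1)
    (ε : ℝ) (hε : 0 < ε)
    (π πk α : X → Measure Y)
    (hπ : ∀ x, IsProbabilityMeasure (π x))
    (hπk : ∀ x, IsProbabilityMeasure (πk x))
    (hα : ∀ x, IsProbabilityMeasure (α x))
    (hint_Jπ : Integrable (fun x => J (fun y => r (x, y)) (π x)) ρ)
    (hint_Jπk : Integrable (fun x => J (fun y => r (x, y)) (πk x)) ρ)
    (hint_L : Integrable (fun x => Ladv (fun y => r (x, y)) (α x) (π x) ε) ρ)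
    (hint_coeff : Integrable (fun x =>
      ((1 - sigmaEps (fun y => r (x, y)) (α x) ε) /
        sigmaEps (fun y => r (x, y)) (α x) ε) ^ 2) ρ)
    (hint_tv2 : Integrable (fun x => (tvDist (π x) (α x)) ^ 2) ρ)
    (hint_tv : Integrable (fun x => tvDist (πk x) (α x)) ρ) :
    (∫ x, J (fun y => r (x, y)) (π x) ∂ρ) - ∫ x, J (fun y => r (x, y)) (πk x) ∂ρ ≥
      (∫ x, Ladv (fun y => r (x, y)) (α x) (π x) ε ∂ρ)
        - 2 * Real.sqrt (∫ x, ((1 - sigmaEps (fun y => r (x, y)) (α x) ε) /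
            sigmaEps (fun y => r (x, y)) (α x) ε) ^ 2 ∂ρ)
          * Real.sqrt (∫ x, (tvDist (π x) (α x)) ^ 2 ∂ρ)
        - 2 * ∫ x, tvDist (πk x) (α x) ∂ρ := by
  have hpointwise : ∀ x, Ladv (fun y => r (x, y)) (α x) (π x) ε
      - |(1 - sigmaEps (fun y => r (x, y)) (α x) ε) / sigmaEps (fun y => r (x, y)) (α x) ε|
        * |tvDist (π x) (α x)| - tvDist (πk x) (α x)
      ≤ J (fun y => r (x, y)) (π x) - J (fun y => r (x, y)) (πk x) := fun x => by
    have := hπ x; have := hπk x; have := hα x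
    rw [abs_of_nonneg (tvDist_nonneg _ _)]
    exact Ladv_sub_tvDist_le (hr_meas.comp measurable_prodMk_left) (fun y => (hr (x, y)).1)
      (fun y => (hr (x, y)).2) hε (π x) (πk x) (α x)
  have hintegrated := integral_sub_sqrt_mul_sqrt_sub_integral_le hint_L hint_coeff hint_tv2
    hint_tv hpointwise (hint_Jπ.sub hint_Jπk)
  have htv_nonneg : 0 ≤ ∫ x, tvDist (πk x) (α x) ∂ρ := integral_nonneg fun x => by
    have := hπk x; have := hα x; exact tvDist_nonneg _ _
  rw [integral_sub hint_Jπ hint_Jπk] at hintegrated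
  have hsqrt_nonneg : 0 ≤ √(∫ x, ((1 - sigmaEps (fun y => r (x, y)) (α x) ε) /
      sigmaEps (fun y => r (x, y)) (α x) ε) ^ 2 ∂ρ) * √(∫ x, (tvDist (π x) (α x)) ^ 2 ∂ρ) := by
    positivity
  linarith

/-- Integrated policy-improvement lower bound over the prompt distribution `ρ`,
obtained from the pointwise bound via Cauchy–Schwarz. -/
theorem integrated_offpolicy_improvement {X Y : Type*}
    [MeasurableSpace X] [MeasurableSpace Y]
    (ρ : Measure X) [IsProbabilityMeasure ρ]
    (r : X × Y → ℝ) (hr_meas : Measurable r) (hr : ∀ p, 0 ≤ r p ∧ r p ≤ 1)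
    (ε : ℝ) (hε : 0 < ε) (hε' : ε ≤ 3 / 4)
    (π πk α : X → Measure Y)
    (hπ : ∀ x, IsProbabilityMeasure (π x))
    (hπk : ∀ x, IsProbabilityMeasure (πk x))
    (hα : ∀ x, IsProbabilityMeasure (α x))
    (hint_Jπ : Integrable (fun x => J (fun y => r (x, y)) (π x)) ρ)
    (hint_Jπk : Integrable (fun x => J (fun y => r (x, y)) (πk x)) ρ)
    (hint_L : Integrable (fun x => Ladv (fun y => r (x, y)) (α x) (π x) ε) ρ)
    (hint_coeff : Integrable (fun x =>
      ((1 - sigmaEps (fun y => r (x, y)) (α x) ε) /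
        sigmaEps (fun y => r (x, y)) (α x) ε) ^ 2) ρ)
    (hint_tv2 : Integrable (fun x => (tvDist (π x) (α x)) ^ 2) ρ)
    (hint_tv : Integrable (fun x => tvDist (πk x) (α x)) ρ) :
    (∫ x, J (fun y => r (x, y)) (π x) ∂ρ) - ∫ x, J (fun y => r (x, y)) (πk x) ∂ρ ≥
      (∫ x, Ladv (fun y => r (x, y)) (α x) (π x) ε ∂ρ)
        - 2 * Real.sqrt (∫ x, ((1 - sigmaEps (fun y => r (x, y)) (α x) ε) /
            sigmaEps (fun y => r (x, y)) (α x) ε) ^ 2 ∂ρ)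
          * Real.sqrt (∫ x, (tvDist (π x) (α x)) ^ 2 ∂ρ)
        - 2 * ∫ x, tvDist (πk x) (α x) ∂ρ :=
  integrated_offpolicy_improvement_general ρ r hr_meas hr ε hε π πk α hπ hπk hα hint_Jπ hint_Jπk
    hint_L hint_coeff hint_tv2 hint_tv
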